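/- arXiv:math/9907173 — 4 statements merged into one kernel-verified Lean document; each statement's English description precedes it below -/
import Mathlib

section
/- The quasi-shuffle product is commutative: for all words w1, w2 in the noncommutative polynomial algebra k⟨A⟩, w1 * w2 = w2 * w1. -/
open Finsupp Classical

noncomputable section

variable {A : Type} 

/-- The word `w` as a basis element of the free module `k⟨A⟩`. -/
def sing (k : Type) [Field k] (w : List A) : List A →₀ k := Finsupp.single w 1

/-- Left multiplication of a linear combination of words by a letter. -/
def consF (k : Type) [Field k] (a : A) (f : List A →₀ k) : List A →₀ k :=
  f.mapDomain (List.cons a)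

/-- Left multiplication by an element of `A ∪ {0}` (with `none` playing the role of `0`). -/
def oconsF (k : Type) [Field k] : Option A → (List A →₀ k) → (List A →₀ k)
  | none, _ => 0
  | Option.some a, f => consF k a f

/-- The quasi-shuffle product of two words, with structure operation `br : A → A → Option A`
(`none` = 0):  `1*w = w*1 = w` and
`aw₁ * bw₂ = a(w₁*bw₂) + b(aw₁*w₂) + [a,b](w₁*w₂)`. -/
def qsh (k : Type) [Field k] (br : A → A → Option A) : List A → List A → (List A →₀ k)
  | [], w => sing k w
  | a :: u, [] => sing k (a :: u)
  | a :: u, b :: v =>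
      consF k a (qsh k br u (b :: v)) + consF k b (qsh k br (a :: u) v)
        + oconsF k (br a b) (qsh k br u v)
  termination_by w1 w2 => w1.length + w2.length

/-- Linear extension of a map defined on words. -/
def liftOne (k : Type) [Field k] {α β : Type} (f : α → (β →₀ k)) : (α →₀ k) → (β →₀ k) :=
  fun x => x.sum fun u c => c • f u

/-- Bilinear extension of a product defined on words. -/
def liftTwo (k : Type) [Field k] {α β : Type} (f : α → α → (β →₀ k)) :
    (α →₀ k) → (α →₀ k) → (β →₀ k) :=
  fun x y => x.sum fun u cu => y.sum fun v cv => (cu * cv) • f u v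

/-- The degree of a word: the sum of the degrees of its letters. -/
def degW (deg : A → ℕ) (w : List A) : ℕ := (w.map deg).sum

/-- The iterated bracket `[S]` of a nonempty sequence of letters (`none` = 0). -/
def brS (br : A → A → Option A) : List A → Option A
  | [] => none
  | [a] => some a
  | a :: b :: w => (brS br (b :: w)).bind (br a)

/-- The contraction `I[w]` of the word `w` along the composition with list of parts `I`:
consecutive blocks of `w` of lengths given by `I` are contracted via the iterated bracket;
the result is `0` if some bracket vanishes. -/
def contract (k : Type) [Field k] (br : A → A → Option A) : List ℕ → List A → (List A →₀ k)
  | [], w => (match w with | [] => sing k [] | _ => 0)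
  | i :: I, w => oconsF k (brS br (w.take i)) (contract k br I (w.drop i))

end

theorem qsh_comm {A : Type} (k : Type) [Field k] (br : A → A → Option A)
    (hcomm : ∀ a b, br a b = br b a) : ∀ u v : List A, qsh k br u v = qsh k br v u
  | [], [] => rfl
  | [], _ :: _ | _ :: _, [] => by simp only [qsh]
  | a :: u, b :: v => by
    rw [qsh, qsh, qsh_comm k br hcomm u, qsh_comm k br hcomm _ v, qsh_comm k br hcomm u v,
      hcomm]
    abel
termination_by u v => u.length + v.length

theorem quasi_shuffle_comm_general {A k : Type} [Field k]
    (br : A → A → Option A)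
    (hcomm : ∀ a b, br a b = br b a) :
    ∀ w1 w2 : List A, qsh k br w1 w2 = qsh k br w2 w1 := by
  exact qsh_comm k br hcomm

/-- The quasi-shuffle product is commutative. -/
theorem quasi_shuffle_comm {A k : Type} [Field k] [CharZero k]
    (deg : A → ℕ) (hpos : ∀ a, 0 < deg a)
    (br : A → A → Option A)
    (hcomm : ∀ a b, br a b = br b a)
    (hassoc : ∀ a b c, (br a b).bind (fun x => br x c) = (br b c).bind (br a))
    (hdeg : ∀ a b c, br a b = some c → deg c = deg a + deg b) :
    ∀ w1 w2 : List A, qsh k br w1 w2 = qsh k br w2 w1 :=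
  quasi_shuffle_comm_general br hcomm
end

section
/- The quasi-shuffle product is associative: for all words w1, w2, w3 in k⟨A⟩, (w1 * w2) * w3 = w1 * (w2 * w3). -/
open Finsupp Classical

/-
Induction on the total length of the three words; the empty word is a two-sided unit. When all
three are nonempty, say `au, bv, cw`, expanding both sides with the defining recursion (extended
bilinearly to the outer product) gives seven terms each: words starting with `a`, `b`, `c`, `[a,b]`, `[a,c]`,
`[b,c]` and `[[a,b],c]` resp. `[a,[b,c]]`. The first six pair off by the induction hypothesis,
and the last pair matches by associativity of the bracket.
-/

section Linearity

variable {A k : Type} [Field k]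

lemma liftTwo_sing_left {β : Type} (f : List A → List A → (β →₀ k)) (u : List A) (y : List A →₀ k) :
    liftTwo k f (sing k u) y = y.sum fun v cv => cv • f u v := by
  unfold liftTwo sing
  rw [Finsupp.sum_single_index] <;> simp

lemma liftTwo_sing_right {β : Type} (f : List A → List A → (β →₀ k)) (x : List A →₀ k) (v : List A) :
    liftTwo k f x (sing k v) = x.sum fun u cu => cu • f u v := by
  unfold liftTwo sing
  refine Finsupp.sum_congr fun u _ => ?_
  rw [Finsupp.sum_single_index] <;> simp

lemma liftTwo_sing_sing {β : Type} (f : List A → List A → (β →₀ k)) (u v : List A) :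
    liftTwo k f (sing k u) (sing k v) = f u v := by
  rw [liftTwo_sing_left, sing, Finsupp.sum_single_index] <;> simp

lemma liftTwo_add_left {α β : Type} (f : α → α → (β →₀ k)) (x x' y : α →₀ k) :
    liftTwo k f (x + x') y = liftTwo k f x y + liftTwo k f x' y := by
  unfold liftTwo
  rw [Finsupp.sum_add_index' (by simp)]
  intro u c c'
  rw [← Finsupp.sum_add]
  exact Finsupp.sum_congr fun v _ => by rw [add_mul, add_smul]

lemma liftTwo_add_right {α β : Type} (f : α → α → (β →₀ k)) (x y y' : α →₀ k) :
    liftTwo k f x (y + y') = liftTwo k f x y + liftTwo k f x y' := by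
  unfold liftTwo
  rw [← Finsupp.sum_add]
  refine Finsupp.sum_congr fun u _ => ?_
  rw [Finsupp.sum_add_index' (by simp)]
  intro v c c'
  rw [mul_add, add_smul]

lemma liftTwo_zero_left {α β : Type} (f : α → α → (β →₀ k)) (y : α →₀ k) :
    liftTwo k f 0 y = 0 :=
  Finsupp.sum_zero_index

lemma liftTwo_zero_right {α β : Type} (f : α → α → (β →₀ k)) (x : α →₀ k) :
    liftTwo k f x 0 = 0 := by
  simp [liftTwo]

lemma sum_smul_sing (y : List A →₀ k) : (y.sum fun v c => c • sing k v) = y := by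
  conv_rhs => rw [← y.sum_single]
  exact Finsupp.sum_congr fun v _ => by rw [sing, Finsupp.smul_single, smul_eq_mul, mul_one]

end Linearity

section Cons

variable {A k : Type} [Field k]

lemma consF_add (a : A) (x y : List A →₀ k) : consF k a (x + y) = consF k a x + consF k a y :=
  Finsupp.mapDomain_add

lemma consF_smul (a : A) (c : k) (x : List A →₀ k) : consF k a (c • x) = c • consF k a x :=
  Finsupp.mapDomain_smul _ _

lemma oconsF_smul (e : Option A) (c : k) (x : List A →₀ k) :
    oconsF k e (c • x) = c • oconsF k e x := by
  cases e <;> simp [oconsF, consF_smul]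

lemma consF_sum (a : A) (x : List A →₀ k) (g : List A → k → (List A →₀ k)) :
    consF k a (x.sum g) = x.sum fun u c => consF k a (g u c) :=
  Finsupp.mapDomain_sum

lemma oconsF_sum (e : Option A) (x : List A →₀ k) (g : List A → k → (List A →₀ k)) :
    oconsF k e (x.sum g) = x.sum fun u c => oconsF k e (g u c) := by
  cases e
  · simp [oconsF]
  · exact consF_sum _ _ _

lemma liftTwo_consF_sing {β : Type} (f : List A → List A → (β →₀ k)) (a : A)
    (x : List A →₀ k) (v : List A) :
    liftTwo k f (consF k a x) (sing k v) = x.sum fun u cu => cu • f (a :: u) v := by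
  rw [liftTwo_sing_right]
  exact Finsupp.sum_mapDomain_index (fun u => by simp) (fun u c c' => by rw [add_smul])

lemma liftTwo_sing_consF {β : Type} (f : List A → List A → (β →₀ k)) (u : List A) (b : A)
    (y : List A →₀ k) :
    liftTwo k f (sing k u) (consF k b y) = y.sum fun v cv => cv • f u (b :: v) := by
  rw [liftTwo_sing_left]
  exact Finsupp.sum_mapDomain_index (fun v => by simp) (fun v c c' => by rw [add_smul])

end Cons

section QuasiShuffle

variable {A k : Type} [Field k] (br : A → A → Option A)

lemma qsh_nil_left (w : List A) : qsh k br [] w = sing k w := by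
  rw [qsh]

lemma qsh_nil_right (w : List A) : qsh k br w [] = sing k w := by
  cases w <;> rw [qsh]

lemma qsh_cons_cons (a b : A) (u v : List A) :
    qsh k br (a :: u) (b :: v) =
      consF k a (qsh k br u (b :: v)) + consF k b (qsh k br (a :: u) v)
        + oconsF k (br a b) (qsh k br u v) := by
  rw [qsh]

lemma liftTwo_qsh_sing_nil_left (y : List A →₀ k) :
    liftTwo k (qsh k br) (sing k []) y = y := by
  simp only [liftTwo_sing_left, qsh_nil_left, sum_smul_sing]

lemma liftTwo_qsh_sing_nil_right (x : List A →₀ k) :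
    liftTwo k (qsh k br) x (sing k []) = x := by
  simp only [liftTwo_sing_right, qsh_nil_right, sum_smul_sing]

lemma liftTwo_qsh_consF_sing_cons (a c : A) (x : List A →₀ k) (w : List A) :
    liftTwo k (qsh k br) (consF k a x) (sing k (c :: w)) =
      consF k a (liftTwo k (qsh k br) x (sing k (c :: w)))
        + consF k c (liftTwo k (qsh k br) (consF k a x) (sing k w))
        + oconsF k (br a c) (liftTwo k (qsh k br) x (sing k w)) := by
  rw [liftTwo_consF_sing, liftTwo_consF_sing, liftTwo_sing_right, liftTwo_sing_right]
  simp only [qsh_cons_cons, smul_add, consF_smul, oconsF_smul, Finsupp.sum_add, consF_sum,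
    oconsF_sum]

lemma liftTwo_qsh_oconsF_sing_cons (e : Option A) (c : A) (x : List A →₀ k) (w : List A) :
    liftTwo k (qsh k br) (oconsF k e x) (sing k (c :: w)) =
      oconsF k e (liftTwo k (qsh k br) x (sing k (c :: w)))
        + consF k c (liftTwo k (qsh k br) (oconsF k e x) (sing k w))
        + oconsF k (e.bind fun d => br d c) (liftTwo k (qsh k br) x (sing k w)) := by
  cases e with
  | none => simp [oconsF, liftTwo_zero_left, Finsupp.mapDomain_zero, consF]
  | some d => exact liftTwo_qsh_consF_sing_cons br d c x w

lemma liftTwo_qsh_sing_cons_consF (a b : A) (u : List A) (y : List A →₀ k) :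
    liftTwo k (qsh k br) (sing k (a :: u)) (consF k b y) =
      consF k a (liftTwo k (qsh k br) (sing k u) (consF k b y))
        + consF k b (liftTwo k (qsh k br) (sing k (a :: u)) y)
        + oconsF k (br a b) (liftTwo k (qsh k br) (sing k u) y) := by
  rw [liftTwo_sing_consF, liftTwo_sing_consF, liftTwo_sing_left, liftTwo_sing_left]
  simp only [qsh_cons_cons, smul_add, consF_smul, oconsF_smul, Finsupp.sum_add, consF_sum,
    oconsF_sum]

lemma liftTwo_qsh_sing_cons_oconsF (a : A) (u : List A) (e : Option A) (y : List A →₀ k) :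
    liftTwo k (qsh k br) (sing k (a :: u)) (oconsF k e y) =
      consF k a (liftTwo k (qsh k br) (sing k u) (oconsF k e y))
        + oconsF k e (liftTwo k (qsh k br) (sing k (a :: u)) y)
        + oconsF k (e.bind (br a)) (liftTwo k (qsh k br) (sing k u) y) := by
  cases e with
  | none => simp [oconsF, liftTwo_zero_right, Finsupp.mapDomain_zero, consF]
  | some d => exact liftTwo_qsh_sing_cons_consF br a d u y

lemma liftTwo_qsh_qsh_sing_cons (a b c : A) (u v w : List A) :
    liftTwo k (qsh k br) (qsh k br (a :: u) (b :: v)) (sing k (c :: w)) =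
      consF k a (liftTwo k (qsh k br) (qsh k br u (b :: v)) (sing k (c :: w)))
        + consF k b (liftTwo k (qsh k br) (qsh k br (a :: u) v) (sing k (c :: w)))
        + oconsF k (br a b) (liftTwo k (qsh k br) (qsh k br u v) (sing k (c :: w)))
        + consF k c (liftTwo k (qsh k br) (qsh k br (a :: u) (b :: v)) (sing k w))
        + oconsF k (br a c) (liftTwo k (qsh k br) (qsh k br u (b :: v)) (sing k w))
        + oconsF k (br b c) (liftTwo k (qsh k br) (qsh k br (a :: u) v) (sing k w))
        + oconsF k ((br a b).bind fun d => br d c)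
            (liftTwo k (qsh k br) (qsh k br u v) (sing k w)) := by
  conv_lhs => rw [qsh_cons_cons br a b u v]
  rw [liftTwo_add_left, liftTwo_add_left, liftTwo_qsh_consF_sing_cons,
    liftTwo_qsh_consF_sing_cons, liftTwo_qsh_oconsF_sing_cons]
  conv_rhs =>
    rw [qsh_cons_cons br a b u v, liftTwo_add_left, liftTwo_add_left, consF_add, consF_add]
  abel

lemma liftTwo_qsh_sing_cons_qsh (a b c : A) (u v w : List A) :
    liftTwo k (qsh k br) (sing k (a :: u)) (qsh k br (b :: v) (c :: w)) =
      consF k a (liftTwo k (qsh k br) (sing k u) (qsh k br (b :: v) (c :: w)))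
        + consF k b (liftTwo k (qsh k br) (sing k (a :: u)) (qsh k br v (c :: w)))
        + oconsF k (br a b) (liftTwo k (qsh k br) (sing k u) (qsh k br v (c :: w)))
        + consF k c (liftTwo k (qsh k br) (sing k (a :: u)) (qsh k br (b :: v) w))
        + oconsF k (br a c) (liftTwo k (qsh k br) (sing k u) (qsh k br (b :: v) w))
        + oconsF k (br b c) (liftTwo k (qsh k br) (sing k (a :: u)) (qsh k br v w))
        + oconsF k ((br b c).bind (br a))
            (liftTwo k (qsh k br) (sing k u) (qsh k br v w)) := by
  conv_lhs => rw [qsh_cons_cons br b c v w]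
  rw [liftTwo_add_right, liftTwo_add_right, liftTwo_qsh_sing_cons_consF,
    liftTwo_qsh_sing_cons_consF, liftTwo_qsh_sing_cons_oconsF]
  conv_rhs =>
    rw [qsh_cons_cons br b c v w, liftTwo_add_right, liftTwo_add_right, consF_add, consF_add]
  abel

theorem qsh_assoc (hassoc : ∀ a b c, (br a b).bind (fun x => br x c) = (br b c).bind (br a)) :
    ∀ w1 w2 w3 : List A,
      liftTwo k (qsh k br) (qsh k br w1 w2) (sing k w3)
        = liftTwo k (qsh k br) (sing k w1) (qsh k br w2 w3)
  | [], v, w => by rw [qsh_nil_left, liftTwo_sing_sing, liftTwo_qsh_sing_nil_left]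
  | a :: u, [], w => by rw [qsh_nil_right, qsh_nil_left]
  | a :: u, b :: v, [] => by
    rw [liftTwo_qsh_sing_nil_right, qsh_nil_right, liftTwo_sing_sing]
  | a :: u, b :: v, c :: w => by
    rw [liftTwo_qsh_qsh_sing_cons, liftTwo_qsh_sing_cons_qsh, hassoc a b c,
      qsh_assoc hassoc u (b :: v) (c :: w), qsh_assoc hassoc (a :: u) v (c :: w),
      qsh_assoc hassoc (a :: u) (b :: v) w, qsh_assoc hassoc u v (c :: w),
      qsh_assoc hassoc u (b :: v) w, qsh_assoc hassoc (a :: u) v w, qsh_assoc hassoc u v w]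
termination_by w1 w2 w3 => w1.length + w2.length + w3.length

end QuasiShuffle

theorem quasi_shuffle_assoc_general {A k : Type} [Field k]
    (br : A → A → Option A)
    (hassoc : ∀ a b c, (br a b).bind (fun x => br x c) = (br b c).bind (br a)) :
    ∀ w1 w2 w3 : List A,
      liftTwo k (qsh k br) (qsh k br w1 w2) (sing k w3)
        = liftTwo k (qsh k br) (sing k w1) (qsh k br w2 w3) :=
  qsh_assoc br hassoc

/-- The quasi-shuffle product is associative:
`(w1 * w2) * w3 = w1 * (w2 * w3)` for all words, where the product of the linear
combination `w1 * w2` with the word `w3` is the bilinear extension of `*`. -/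
theorem quasi_shuffle_assoc {A k : Type} [Field k] [CharZero k]
    (deg : A → ℕ) (hpos : ∀ a, 0 < deg a)
    (br : A → A → Option A)
    (hcomm : ∀ a b, br a b = br b a)
    (hassoc : ∀ a b c, (br a b).bind (fun x => br x c) = (br b c).bind (br a))
    (hdeg : ∀ a b c, br a b = some c → deg c = deg a + deg b) :
    ∀ w1 w2 w3 : List A,
      liftTwo k (qsh k br) (qsh k br w1 w2) (sing k w3)
        = liftTwo k (qsh k br) (sing k w1) (qsh k br w2 w3) :=
  quasi_shuffle_assoc_general br hassoc
end

section
/- Let f(t) = a₁t + a₂t² + ⋯ be a formal power series over k with a₁ ≠ 0, and f⁻¹(t) = b₁t + b₂t² + ⋯ its compositional inverse. Define linear maps Ψ_f and Ψ_{f⁻¹} on k⟨A⟩ by Ψ_f(w) = Σ_{I∈C(ℓ(w))} a_{i₁}⋯a_{i_l} I[w] and similarly for Ψ_{f⁻¹} with the b's. Then Ψ_{f⁻¹} ∘ Ψ_f = id. -/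
open Finsupp Classical

/-- The map `Ψ_f` associated with a coefficient sequence `c` (where `c n` is the coefficient
of `tⁿ` in `f`): `Ψ_f(w) = Σ_{I ∈ C(ℓ(w))} c_{i₁}⋯c_{i_l} I[w]`. -/
noncomputable def Psi (k : Type) [Field k] {A : Type} (br : A → A → Option A) (c : ℕ → k) (w : List A) :
    List A →₀ k :=
  ∑ I : Composition w.length, ((I.blocks.map c).prod) • contract k br I.blocks w

namespace PsiAux

variable {A : Type} (br : A → A → Option A)

def contractW : List ℕ → List A → Option (List A)
  | [], [] => some []
  | [], _ :: _ => none
  | i :: I, w => (brS br (w.take i)).bind fun x => (contractW I (w.drop i)).map (x :: ·)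

def mergeC : List ℕ → List ℕ → List ℕ
  | _, [] => []
  | I, j :: J => (I.take j).sum :: mergeC (I.drop j) J

noncomputable def optF (k : Type) [Field k] : Option (List A) → (List A →₀ k)
  | none => 0
  | Option.some u => sing k u

variable (k : Type) [Field k]

lemma oconsF_optF (o : Option A) (t : Option (List A)) :
    oconsF k o (optF k t) = optF k (o.bind fun x => t.map (x :: ·)) := by
  cases o with
  | none => rfl
  | some x =>
    cases t with
    | none => simp [oconsF, optF, consF]
    | some u =>
      show consF k x (sing k u) = sing k (x :: u)
      simp [consF, sing, Finsupp.mapDomain_single]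

lemma contract_eq : ∀ (I : List ℕ) (w : List A),
    contract k br I w = optF k (contractW br I w)
  | [], [] => rfl
  | [], _ :: _ => rfl
  | i :: I, w => by
    rw [show contract k br (i :: I) w
        = oconsF k (brS br (w.take i)) (contract k br I (w.drop i)) from rfl,
      contract_eq I (w.drop i), oconsF_optF]
    rfl

lemma brS_cons (a : A) (v : List A) (hv : v ≠ []) :
    brS br (a :: v) = (brS br v).bind (br a) := by
  cases v with
  | nil => exact absurd rfl hv
  | cons b v' => rfl

lemma brS_append (hassoc : ∀ a b c, (br a b).bind (fun x => br x c) = (br b c).bind (br a)) :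
    ∀ (u v : List A), u ≠ [] → v ≠ [] →
    brS br (u ++ v) = (brS br u).bind fun x => (brS br v).bind (br x)
  | [], _, hu, _ => absurd rfl hu
  | [a], v, _, hv => by
    rw [List.singleton_append, brS_cons br a v hv]
    rfl
  | a :: b :: u, v, _, hv => by
    rw [List.cons_append, brS_cons br a ((b :: u) ++ v) (by simp),
      brS_append hassoc (b :: u) v (by simp) hv]
    show _ = ((brS br (b :: u)).bind (br a)).bind fun x => (brS br v).bind (br x)
    cases brS br (b :: u) with
    | none => rfl
    | some p =>
      cases hbv : brS br v with
      | none => simp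
      | some q => simpa using (hassoc a p q).symm

lemma contractW_length : ∀ (I : List ℕ) (v u : List A),
    contractW br I v = some u → u.length = I.length
  | [], [], u, h => by simp [contractW] at h; simp [← h]
  | [], _ :: _, u, h => by simp [contractW] at h
  | i :: I, v, u, h => by
    simp only [contractW] at h
    cases hx : brS br (v.take i) with
    | none => rw [hx] at h; simp at h
    | some x =>
      rw [hx] at h
      cases ht : contractW br I (v.drop i) with
      | none => rw [ht] at h; simp at h
      | some u' =>
        rw [ht] at h
        simp only [Option.bind_some, Option.map_some] at h
        obtain rfl : x :: u' = u := Option.some.inj h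
        simp [contractW_length I (v.drop i) u' ht]


lemma contractW_bind_brS (hassoc : ∀ a b c, (br a b).bind (fun x => br x c) = (br b c).bind (br a)) :
    ∀ (I : List ℕ) (v : List A), I ≠ [] → (∀ i ∈ I, 0 < i) → I.sum = v.length →
    (contractW br I v).bind (brS br) = brS br v
  | [], _, hI, _, _ => absurd rfl hI
  | [i], v, _, _, hs => by
    have hi : i = v.length := by simpa using hs
    have h1 : v.take i = v := List.take_of_length_le (le_of_eq hi.symm)
    have h2 : v.drop i = [] := List.drop_eq_nil_of_le (le_of_eq hi.symm)
    simp only [contractW, h1, h2]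
    cases brS br v with
    | none => rfl
    | some x => rfl
  | i :: j :: I, v, _, hpos, hs => by
    have hjI : (j :: I) ≠ [] := by simp
    have hipos : 0 < i := hpos i (by simp)
    have hjsum : 0 < (j :: I).sum :=
      lt_of_lt_of_le (hpos j (by simp)) (by simp [List.sum_cons])
    have hvlen : v.length = i + (j :: I).sum := by
      rw [← hs]; simp [List.sum_cons]
    have htne : v.take i ≠ [] := by
      apply List.ne_nil_of_length_pos
      rw [List.length_take]
      exact lt_min hipos (by omega)
    have hdne : v.drop i ≠ [] := by
      apply List.ne_nil_of_length_pos
      rw [List.length_drop]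
      omega
    have hdsum : (j :: I).sum = (v.drop i).length := by
      rw [List.length_drop]; omega
    have IH := contractW_bind_brS hassoc (j :: I) (v.drop i) hjI
      (fun x hx => hpos x (by simp [hx])) hdsum
    conv_rhs => rw [← List.take_append_drop i v]
    rw [brS_append br hassoc _ _ htne hdne]
    show ((brS br (v.take i)).bind fun x =>
        (contractW br (j :: I) (v.drop i)).map (x :: ·)).bind (brS br) = _
    cases hx : brS br (v.take i) with
    | none => rfl
    | some x =>
      cases ht : contractW br (j :: I) (v.drop i) with
      | none =>
        rw [ht] at IH
        simp only [Option.bind_none] at IH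
        rw [← IH]
        simp
      | some u =>
        rw [ht] at IH
        simp only [Option.bind_some, Option.map_some] at IH
        simp only [Option.bind_some, Option.map_some]
        have hune : u ≠ [] := by
          apply List.ne_nil_of_length_pos
          rw [contractW_length br (j :: I) (v.drop i) u ht]
          simp
        rw [brS_cons br x u hune, IH]

lemma contractW_append : ∀ (I J : List ℕ) (w : List A),
    contractW br (I ++ J) w = (contractW br I (w.take I.sum)).bind fun u1 =>
      (contractW br J (w.drop I.sum)).map (u1 ++ ·)
  | [], J, w => by
    simp only [List.nil_append, List.sum_nil, List.take_zero, List.drop_zero]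
    show _ = (Option.some []).bind fun u1 => (contractW br J w).map (u1 ++ ·)
    simp only [Option.bind_some, List.nil_append]
    cases contractW br J w <;> rfl
  | i :: I, J, w => by
    have IH := contractW_append I J (w.drop i)
    have e1 : (w.take ((i :: I).sum)).take i = w.take i := by
      rw [List.take_take, List.sum_cons, Nat.min_eq_left (Nat.le_add_right _ _)]
    have e2 : (w.take ((i :: I).sum)).drop i = (w.drop i).take I.sum := by
      rw [List.drop_take, List.sum_cons, Nat.add_sub_cancel_left]
    have e3 : w.drop ((i :: I).sum) = (w.drop i).drop I.sum := by
      rw [List.drop_drop, List.sum_cons, Nat.add_comm]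
    show (brS br (w.take i)).bind (fun x => (contractW br (I ++ J) (w.drop i)).map (x :: ·)) = _
    rw [IH]
    show _ = ((brS br ((w.take ((i :: I).sum)).take i)).bind fun x =>
        (contractW br I ((w.take ((i :: I).sum)).drop i)).map (x :: ·)).bind
        fun u1 => (contractW br J (w.drop ((i :: I).sum))).map (u1 ++ ·)
    rw [e1, e2, e3]
    cases brS br (w.take i) with
    | none => rfl
    | some x =>
      cases contractW br I ((w.drop i).take I.sum) with
      | none => rfl
      | some u1 =>
        cases contractW br J ((w.drop i).drop I.sum) with
        | none => rfl
        | some u2 => simp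

lemma contractW_merge (hassoc : ∀ a b c, (br a b).bind (fun x => br x c) = (br b c).bind (br a)) :
    ∀ (J I : List ℕ) (w : List A),
    (∀ i ∈ I, 0 < i) → I.sum = w.length → (∀ j ∈ J, 0 < j) → J.sum = I.length →
    contractW br (mergeC I J) w = (contractW br I w).bind (contractW br J)
  | [], I, w, _, hIw, _, hJI => by
    obtain rfl : I = [] := List.eq_nil_of_length_eq_zero hJI.symm
    obtain rfl : w = [] := List.eq_nil_of_length_eq_zero (by simpa using hIw.symm)
    rfl
  | j :: J', I, w, hI, hIw, hJ, hJI => by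
    have hjpos : 0 < j := hJ j (by simp)
    have hjle : j ≤ I.length := by
      rw [← hJI, List.sum_cons]; omega
    have hsplit : (I.take j).sum + (I.drop j).sum = I.sum := by
      conv_rhs => rw [← List.take_append_drop j I]
      rw [List.sum_append]
    set s := (I.take j).sum with hs
    have hsle : s ≤ w.length := by rw [← hIw]; omega
    have hIne : I ≠ [] := by
      intro h; rw [h] at hjle; simp at hjle; omega
    have htjne : I.take j ≠ [] := by
      intro h
      rcases List.take_eq_nil_iff.1 h with h' | h'
      · omega
      · exact hIne h'
    have htlen : (I.take j).length = j := by
      rw [List.length_take]; omega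
    have hwtake : (I.take j).sum = (w.take s).length := by
      rw [List.length_take]; omega
    have hCA : contractW br I w = (contractW br (I.take j) (w.take s)).bind fun u1 =>
        (contractW br (I.drop j) (w.drop s)).map (u1 ++ ·) := by
      conv_lhs => rw [← List.take_append_drop j I]
      rw [contractW_append]
    have hB : (contractW br (I.take j) (w.take s)).bind (brS br) = brS br (w.take s) :=
      contractW_bind_brS br hassoc _ _ htjne
        (fun x hx => hI x (List.mem_of_mem_take hx)) hwtake
    have IH := contractW_merge hassoc J' (I.drop j) (w.drop s)
      (fun x hx => hI x (List.mem_of_mem_drop hx))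
      (by rw [List.length_drop]; omega)
      (fun x hx => hJ x (by simp [hx]))
      (by rw [List.length_drop, ← hJI, List.sum_cons]; omega)
    show (brS br (w.take s)).bind (fun x =>
        (contractW br (mergeC (I.drop j) J') (w.drop s)).map (x :: ·)) = _
    rw [IH, hCA]
    cases h1 : contractW br (I.take j) (w.take s) with
    | none =>
      rw [h1] at hB
      simp only [Option.bind_none] at hB ⊢
      rw [← hB]
      simp
    | some u1 =>
      rw [h1] at hB
      simp only [Option.bind_some] at hB ⊢
      rw [← hB]
      have hu1len : u1.length = j := by
        rw [contractW_length br _ _ _ h1, htlen]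
      cases h2 : contractW br (I.drop j) (w.drop s) with
      | none =>
        simp only [Option.bind_none, Option.map_none]
        cases brS br u1 <;> rfl
      | some u2 =>
        simp only [Option.bind_some, Option.map_some]
        show _ = contractW br (j :: J') (u1 ++ u2)
        show _ = (brS br ((u1 ++ u2).take j)).bind fun x =>
          (contractW br J' ((u1 ++ u2).drop j)).map (x :: ·)
        rw [List.take_left' hu1len, List.drop_left' hu1len]

lemma mergeC_eq_split : ∀ (J I : List ℕ), mergeC I J = (List.splitWrtCompositionAux I J).map List.sum
  | [], I => rfl
  | j :: J, I => by
    rw [show mergeC I (j :: J) = (I.take j).sum :: mergeC (I.drop j) J from rfl,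
      mergeC_eq_split J (I.drop j), List.splitWrtCompositionAux_cons, List.map_cons]

lemma mergeC_gather {n : ℕ} (a₀ : Composition n) (b₀ : Composition a₀.length) :
    mergeC a₀.blocks b₀.blocks = (a₀.gather b₀).blocks := by
  rw [mergeC_eq_split]; rfl

lemma contract_ones : ∀ w : List A, contract k br (List.replicate w.length 1) w = sing k w
  | [] => rfl
  | a :: w => by
    show contract k br (1 :: List.replicate w.length 1) (a :: w) = _
    show oconsF k (brS br ((a :: w).take 1))
      (contract k br (List.replicate w.length 1) ((a :: w).drop 1)) = _
    rw [show (a :: w).take 1 = [a] from rfl, show (a :: w).drop 1 = w from rfl,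
      contract_ones w]
    show consF k a (sing k w) = sing k (a :: w)
    simp [consF, sing, Finsupp.mapDomain_single]



variable {A k : Type} [Field k]

lemma liftOne_eq (f : List A → (List A →₀ k)) (x : List A →₀ k) :
    liftOne k f x = Finsupp.linearCombination k f x := by
  rw [Finsupp.linearCombination_apply]; rfl

lemma liftOne_sing (f : List A → (List A →₀ k)) (u : List A) :
    liftOne k f (sing k u) = f u := by
  rw [liftOne_eq, sing, Finsupp.linearCombination_single, one_smul]

lemma liftPsi_contract (br : A → A → Option A)
    (hassoc : ∀ a b c, (br a b).bind (fun x => br x c) = (br b c).bind (br a))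
    (bb : ℕ → k) (w : List A) (I : Composition w.length) :
    liftOne k (Psi k br bb) (contract k br I.blocks w) =
      ∑ J : Composition I.length,
        ((J.blocks.map bb).prod) • contract k br (mergeC I.blocks J.blocks) w := by
  have hmerge : ∀ J : Composition I.length,
      contractW br (mergeC I.blocks J.blocks) w
        = (contractW br I.blocks w).bind (contractW br J.blocks) :=
    fun J => contractW_merge br hassoc J.blocks I.blocks w (fun i hi => I.blocks_pos hi)
      I.blocks_sum (fun j hj => J.blocks_pos hj) (J.blocks_sum.trans I.blocks_length.symm)
  cases h : contractW br I.blocks w with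
  | none =>
    rw [contract_eq br k, h]
    show liftOne k (Psi k br bb) 0 = _
    rw [liftOne_eq, map_zero]
    symm
    apply Finset.sum_eq_zero
    intro J _
    rw [contract_eq br k, hmerge J, h]
    show _ • (0 : List A →₀ k) = 0
    simp
  | some u =>
    rw [contract_eq br k, h]
    show liftOne k (Psi k br bb) (sing k u) = _
    rw [liftOne_sing, Psi]
    have hu : u.length = I.length := (contractW_length br _ _ _ h).trans I.blocks_length
    rw [hu]
    apply Finset.sum_congr rfl
    intro J _
    congr 1
    rw [contract_eq br k, contract_eq br k, hmerge J, h, Option.bind_some]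

end PsiAux

/-- If `f(t) = a₁t + a₂t² + ⋯` with `a₁ ≠ 0` and `f⁻¹(t) = b₁t + b₂t² + ⋯`
is its compositional inverse (expressed coefficientwise: the coefficient of `tⁿ` in
`f⁻¹(f(t)) = Σ_l b_l f(t)^l`, namely `Σ_{I∈C(n)} b_{ℓ(I)} a_{i₁}⋯a_{i_l}`, is `1` for `n = 1`
and `0` for `n > 1`), then `Ψ_{f⁻¹} ∘ Ψ_f = id`. -/
theorem Psi_inverse {A k : Type} [Field k] [CharZero k]
    (br : A → A → Option A)
    (hcomm : ∀ a b, br a b = br b a)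
    (hassoc : ∀ a b c, (br a b).bind (fun x => br x c) = (br b c).bind (br a))
    (a b : ℕ → k) (ha0 : a 0 = 0) (hb0 : b 0 = 0) (ha1 : a 1 ≠ 0)
    (hinv : ∀ n : ℕ, 0 < n →
      (∑ I : Composition n, b I.length * (I.blocks.map a).prod) = if n = 1 then 1 else 0) :
    ∀ x : List A →₀ k, liftOne k (Psi k br b) (liftOne k (Psi k br a) x) = x := by
  have hL : ∀ (f : List A → (List A →₀ k)) (x : List A →₀ k),
      liftOne k f x = Finsupp.linearCombination k f x := fun f x => PsiAux.liftOne_eq f x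
  have key : ∀ w : List A, liftOne k (Psi k br b) (Psi k br a w) = sing k w := by
    intro w
    have step2 : ∀ (c : Composition w.length)
        (d : ∀ i : Fin c.length, Composition (c.blocksFun i)),
        ((((Composition.sigmaEquivSigmaPi w.length).symm ⟨c, d⟩).1.blocks.map a).prod *
          (((Composition.sigmaEquivSigmaPi w.length).symm ⟨c, d⟩).2.blocks.map b).prod) •
          contract k br (PsiAux.mergeC
            ((Composition.sigmaEquivSigmaPi w.length).symm ⟨c, d⟩).1.blocks
            ((Composition.sigmaEquivSigmaPi w.length).symm ⟨c, d⟩).2.blocks) w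
        = (∏ j, (b ((d j).length) * (((d j).blocks.map a).prod))) •
            contract k br c.blocks w := by
      intro c d
      have hg : ((Composition.sigmaEquivSigmaPi w.length).symm ⟨c, d⟩).1.gather
          ((Composition.sigmaEquivSigmaPi w.length).symm ⟨c, d⟩).2 = c :=
        congrArg Sigma.fst ((Composition.sigmaEquivSigmaPi w.length).apply_symm_apply ⟨c, d⟩)
      have h1 : ((Composition.sigmaEquivSigmaPi w.length).symm ⟨c, d⟩).1.blocks
          = (List.ofFn fun j => (d j).blocks).flatten := rfl
      have h2 : ((Composition.sigmaEquivSigmaPi w.length).symm ⟨c, d⟩).2.blocks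
          = List.ofFn fun j => (d j).length := rfl
      rw [PsiAux.mergeC_gather, hg, h1, h2]
      congr 1
      rw [List.map_flatten, List.map_ofFn, List.prod_flatten, List.map_ofFn, List.prod_ofFn,
        List.map_ofFn, List.prod_ofFn, ← Finset.prod_mul_distrib]
      exact Finset.prod_congr rfl fun j _ => by simp [Function.comp, mul_comm]
    have hcoef : ∀ c : Composition w.length,
        (∑ d ∈ (Finset.univ : Finset (∀ j : Fin c.length, Composition (c.blocksFun j))),
          ∏ j, (b ((d j).length) * (((d j).blocks.map a).prod)))
        = if c = Composition.ones w.length then 1 else 0 := by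
      intro c
      have hps : (∑ d ∈ (Finset.univ : Finset (∀ j : Fin c.length, Composition (c.blocksFun j))),
          ∏ j, (b ((d j).length) * (((d j).blocks.map a).prod)))
          = ∏ j : Fin c.length, ∑ x ∈ (Finset.univ : Finset (Composition (c.blocksFun j))),
              b x.length * ((x.blocks.map a).prod) := by
        rw [← Fintype.piFinset_univ]
        exact (Finset.prod_univ_sum
          (fun j : Fin c.length => (Finset.univ : Finset (Composition (c.blocksFun j))))
          (fun j x => b x.length * ((x.blocks.map a).prod))).symm
      rw [hps]
      have hone : ∀ j : Fin c.length,
          (∑ x ∈ (Finset.univ : Finset (Composition (c.blocksFun j))),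
            b x.length * ((x.blocks.map a).prod)) = if c.blocksFun j = 1 then 1 else 0 :=
        fun j => hinv _ (c.one_le_blocksFun j)
      rw [Finset.prod_congr rfl fun j _ => hone j]
      by_cases hc : c = Composition.ones w.length
      · rw [if_pos hc]
        subst hc
        simp [Composition.ones_blocksFun]
      · rw [if_neg hc]
        obtain ⟨j, hj⟩ : ∃ j : Fin c.length, c.blocksFun j ≠ 1 := by
          by_contra hcon
          push_neg at hcon
          apply hc
          apply Composition.eq_ones_iff.2
          intro i hi
          obtain ⟨m, hm⟩ := List.get_of_mem hi
          rw [← hm]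
          exact hcon ⟨m.1, by simpa [Composition.blocks_length] using m.2⟩
        exact Finset.prod_eq_zero (Finset.mem_univ j) (by rw [if_neg hj])
    rw [hL, Psi, map_sum]
    have step1 : ∀ I : Composition w.length,
        (Finsupp.linearCombination k (Psi k br b)) ((I.blocks.map a).prod • contract k br I.blocks w)
        = ∑ J : Composition I.length,
            ((I.blocks.map a).prod * (J.blocks.map b).prod) •
              contract k br (PsiAux.mergeC I.blocks J.blocks) w := by
      intro I
      rw [map_smul, ← hL, PsiAux.liftPsi_contract br hassoc b w I, Finset.smul_sum]
      exact Finset.sum_congr rfl fun J _ => by rw [smul_smul]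
    rw [Finset.sum_congr rfl fun I _ => step1 I, Finset.sum_sigma', Finset.univ_sigma_univ]
    refine Eq.trans (Fintype.sum_equiv (Composition.sigmaEquivSigmaPi w.length).symm
      (fun y : Σ c : Composition w.length, ∀ i : Fin c.length, Composition (c.blocksFun i) =>
        (∏ j, (b ((y.2 j).length) * (((y.2 j).blocks.map a).prod))) • contract k br y.1.blocks w)
      _ ?_).symm ?_
    · intro y
      exact (step2 y.1 y.2).symm
    · rw [← Finset.univ_sigma_univ, Finset.sum_sigma]
      refine Eq.trans (Finset.sum_congr
        (g := fun c : Composition w.length =>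
          (if c = Composition.ones w.length then (1 : k) else 0) • contract k br c.blocks w)
        rfl (fun c _ => ?_)) ?_
      · show (∑ d ∈ (Finset.univ : Finset (∀ j : Fin c.length, Composition (c.blocksFun j))),
            (∏ j, (b ((d j).length) * (((d j).blocks.map a).prod))) • contract k br c.blocks w)
            = _
        rw [← Finset.sum_smul, hcoef c]
      · simp only [ite_smul, one_smul, zero_smul, Finset.sum_ite_eq', Finset.mem_univ, if_true]
        rw [Composition.ones_blocks]
        exact PsiAux.contract_ones br k w
  intro x
  rw [hL (Psi k br a) x, Finsupp.linearCombination_apply, Finsupp.sum, hL, map_sum]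
  have hterm : ∀ w ∈ x.support,
      (Finsupp.linearCombination k (Psi k br b)) (x w • Psi k br a w)
        = Finsupp.single w (x w) := by
    intro w _
    rw [map_smul, ← hL, key w, sing, Finsupp.smul_single, smul_eq_mul, mul_one]
  rw [Finset.sum_congr rfl hterm]
  exact Finsupp.sum_single x
end

section
/- The number Lₙ of Lyndon words of degree n in k⟨A⟩ satisfies Lₙ = (1/n) Σ_{d|n} μ(n/d) c_d, where the c_n are defined by x (d/dx) log A(x) = Σ_{n≥1} c_n xⁿ and A(x) = (1 - Σ_{n≥1} |A_n| xⁿ)^{-1} is the Poincaré series of k⟨A⟩. -/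
set_option linter.unusedSectionVars false
set_option maxHeartbeats 1000000


open Finsupp Classical

/-- A word is Lyndon if it is nonempty and lexicographically smaller than each of its
proper right factors. -/
def LyndonW {A : Type} [LinearOrder A] (w : List A) : Prop :=
  w ≠ [] ∧ ∀ u v : List A, u ≠ [] → v ≠ [] → w = u ++ v → List.Lex (· < ·) w v

set_option linter.docPrime false in
abbrev Lyn (A : Type) [LinearOrder A] := {l : List A // LyndonW l}

namespace CFL

variable {α : Type} [LinearOrder α]

theorem lt_append_right (u : List α) {t : List α} (ht : t ≠ []) : u < u ++ t := by
  induction u with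
  | nil =>
    cases t with
    | nil => exact absurd rfl ht
    | cons a t => exact List.Lex.nil
  | cons a u ih => exact List.Lex.cons ih

theorem le_of_prefix {u v : List α} (h : u <+: v) : u ≤ v := by
  obtain ⟨t, rfl⟩ := h
  rcases eq_or_ne t [] with rfl | ht
  · simp
  · exact (lt_append_right u ht).le

theorem lex_append_of_not_prefix : ∀ {u v : List α}, u < v → ¬ u <+: v →
    ∀ x y, u ++ x < v ++ y := by
  intro u v h
  replace h : List.Lex (· < ·) u v := h
  induction h with
  | nil => intro hp; exact absurd (List.nil_prefix) hp
  | @rel a l₁ b l₂ hab => intro _ x y; exact List.Lex.rel hab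
  | @cons a l₁ l₂ h ih =>
    intro hp x y
    exact List.Lex.cons (ih (fun hpre => hp ((List.cons_prefix_cons).2 ⟨rfl, hpre⟩)) x y)

theorem lyndon_singleton (a : α) : LyndonW [a] := by
  refine ⟨by simp, fun u v hu hv huv => ?_⟩
  exfalso
  rcases u with _ | ⟨x, u⟩
  · exact hu rfl
  · rcases v with _ | ⟨y, v⟩
    · exact hv rfl
    · simp at huv

theorem lyndon_lt_suffix {w u v : List α} (hw : LyndonW w) (hu : u ≠ []) (hv : v ≠ [])
    (h : w = u ++ v) : w < v := hw.2 u v hu hv h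

theorem lyndon_append {u v : List α} (hu : LyndonW u) (hv : LyndonW v) (huv : u < v) :
    LyndonW (u ++ v) ∧ u ++ v < v := by
  have key : u ++ v < v := by
    by_cases hp : u <+: v
    · obtain ⟨v', rfl⟩ := hp
      have hv' : v' ≠ [] := by
        rintro rfl
        simp at huv
      have h2 : u ++ v' < v' := lyndon_lt_suffix hv hu.1 hv' rfl
      exact List.Lex.append_left _ h2 u
    · have := lex_append_of_not_prefix huv hp v []
      simpa using this
  refine ⟨⟨by simp [hu.1], fun s t hs ht hst => ?_⟩, key⟩
  rcases List.append_eq_append_iff.1 hst.symm with ⟨a', hu2, ht2⟩ | ⟨c', hs2, hv2⟩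
  · -- u = s ++ a', t = a' ++ v
    rcases eq_or_ne a' [] with rfl | ha'
    · simp only [List.nil_append] at ht2; exact ht2 ▸ key
    · have h1 : u < a' := lyndon_lt_suffix hu hs ha' hu2
      have h2 : ¬ u <+: a' := by
        intro hpre
        have hle := hpre.length_le
        have : a'.length < u.length := by
          have : s.length ≠ 0 := by simpa using hs
          subst hu2
          simp [List.length_append]; omega
        omega
      subst ht2
      exact lex_append_of_not_prefix h1 h2 v v
  · -- s = u ++ c', v = c' ++ t
    rcases eq_or_ne c' [] with rfl | hc'
    · simp only [List.nil_append] at hv2; exact hv2 ▸ key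
    · exact lt_trans key (lyndon_lt_suffix hv hc' ht hv2)

end CFL

namespace CFL2
open CFL

variable {α : Type} [LinearOrder α]

theorem eq_nil_of_flatten {M : List (List α)} (hly : ∀ m ∈ M, LyndonW m)
    (h : M.flatten = []) : M = [] := by
  cases M with
  | nil => rfl
  | cons m M =>
    exfalso
    exact (hly m (by simp)).1 ((List.flatten_eq_nil_iff.1 h) m (by simp))

theorem last_min : ∀ (M : List (List α)) (hne : M ≠ []),
    (∀ m ∈ M, LyndonW m) → M.Chain' (· ≥ ·) →
    ∀ s : List α, s ≠ [] → s <:+ M.flatten → M.getLast hne ≤ s := by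
  intro M
  induction M with
  | nil => intro h; exact absurd rfl h
  | cons m M ih =>
    intro hne hly hch s hs hsuf
    cases M with
    | nil =>
      obtain ⟨u, hu⟩ := hsuf
      simp only [List.flatten_cons, List.flatten_nil, List.append_nil] at hu
      rcases eq_or_ne u [] with rfl | hu'
      · simp only [List.nil_append] at hu
        subst hu; simp [List.getLast]
      · have := lyndon_lt_suffix (hly m (by simp)) hu' hs hu.symm
        simpa [List.getLast] using this.le
    | cons m' M' =>
      have hne' : m' :: M' ≠ [] := by simp
      have hlast : (m :: m' :: M').getLast hne = (m' :: M').getLast hne' :=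
        List.getLast_cons _
      have hly' : ∀ x ∈ m' :: M', LyndonW x := fun x hx => hly x (by simp [hx])
      have hch' : (m' :: M').Chain' (· ≥ ·) := hch.tail
      have hlem : (m :: m' :: M').getLast hne ≤ m := by
        rw [hlast]
        have hpw := (List.isChain_iff_pairwise.1 hch)
        exact (List.pairwise_cons.1 hpw).1 _ ((m' :: M').getLast_mem hne')
      obtain ⟨u, hu⟩ := hsuf
      have hufl : u ++ s = m ++ (m' :: M').flatten := by simpa using hu
      rcases List.append_eq_append_iff.1 hufl with ⟨a', hm, hs2⟩ | ⟨c', hu2, hfl⟩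
      · -- m = u ++ a', s = a' ++ flatten (m'::M')
        rcases eq_or_ne a' [] with rfl | ha'
        · simp only [List.nil_append] at hs2
          rw [hlast]
          exact ih hne' hly' hch' s hs (hs2 ▸ List.suffix_refl _)
        · rcases eq_or_ne u [] with rfl | hu'
          · simp only [List.nil_append] at hm
            subst hm
            have : m ≤ s := hs2 ▸ le_of_prefix ⟨(m' :: M').flatten, rfl⟩
            exact le_trans hlem this
          · have h1 : m < a' := lyndon_lt_suffix (hly m (by simp)) hu' ha' hm
            have h2 : a' ≤ s := hs2 ▸ le_of_prefix ⟨(m' :: M').flatten, rfl⟩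
            exact le_trans hlem (le_trans h1.le h2)
      · -- u = m ++ c', flatten (m'::M') = c' ++ s
        rw [hlast]
        exact ih hne' hly' hch' s hs ⟨c', hfl.symm⟩

theorem cfl_insert : ∀ (L : List (List α)), (∀ m ∈ L, LyndonW m) → L.Chain' (· ≥ ·) →
    ∀ u, LyndonW u → ∃ L' : List (List α), (∀ m ∈ L', LyndonW m) ∧ L'.Chain' (· ≥ ·) ∧
      L'.flatten = u ++ L.flatten := by
  intro L
  induction L with
  | nil => intro _ _ u hu; exact ⟨[u], by simpa using hu, List.isChain_singleton u, by simp⟩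
  | cons v L ih =>
    intro hly hch u hu
    by_cases hvu : v ≤ u
    · refine ⟨u :: v :: L, ?_, List.isChain_cons_cons.2 ⟨hvu, hch⟩, by simp⟩
      intro m hm
      rcases (List.mem_cons).1 hm with rfl | hm
      · exact hu
      · exact hly m hm
    · push_neg at hvu
      obtain ⟨luv, -⟩ := lyndon_append hu (hly v (by simp)) hvu
      obtain ⟨L', hL1, hL2, hL3⟩ := ih (fun m hm => hly m (by simp [hm])) hch.tail (u ++ v) luv
      exact ⟨L', hL1, hL2, by rw [hL3]; simp⟩

theorem cfl_exists (w : List α) : ∃ M : List (List α),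
    (∀ m ∈ M, LyndonW m) ∧ M.Chain' (· ≥ ·) ∧ M.flatten = w := by
  induction w with
  | nil => exact ⟨[], by simp, List.isChain_nil, by simp⟩
  | cons a w ih =>
    obtain ⟨M, h1, h2, h3⟩ := ih
    obtain ⟨L', hL1, hL2, hL3⟩ := cfl_insert M h1 h2 [a] (lyndon_singleton a)
    exact ⟨L', hL1, hL2, by rw [hL3, h3]; rfl⟩

theorem cfl_unique : ∀ (n : ℕ) (M N : List (List α)),
    (∀ m ∈ M, LyndonW m) → M.Chain' (· ≥ ·) →
    (∀ m ∈ N, LyndonW m) → N.Chain' (· ≥ ·) →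
    M.flatten = N.flatten → M.flatten.length ≤ n → M = N := by
  intro n
  induction n with
  | zero =>
    intro M N hM _ hN _ hMN hlen
    have hMnil : M.flatten = [] := List.eq_nil_of_length_eq_zero (Nat.le_zero.1 hlen)
    rw [eq_nil_of_flatten hM hMnil, eq_nil_of_flatten hN (hMN ▸ hMnil)]
  | succ n ih =>
    intro M N hM hcM hN hcN hMN hlen
    rcases eq_or_ne M [] with rfl | hMne
    · rw [eq_nil_of_flatten hN (by simpa using hMN.symm)]
    rcases eq_or_ne N [] with rfl | hNne
    · rw [eq_nil_of_flatten hM (by simpa using hMN)]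
    set x := M.getLast hMne with hxdef
    set y := N.getLast hNne with hydef
    have hxly : LyndonW x := hM x (M.getLast_mem hMne)
    have hyly : LyndonW y := hN y (N.getLast_mem hNne)
    have hMsplit : M.dropLast ++ [x] = M := List.dropLast_append_getLast hMne
    have hNsplit : N.dropLast ++ [y] = N := List.dropLast_append_getLast hNne
    have hMfl : M.flatten = M.dropLast.flatten ++ x := by
      conv_lhs => rw [← hMsplit]
      exact List.flatten_concat
    have hNfl : N.flatten = N.dropLast.flatten ++ y := by
      conv_lhs => rw [← hNsplit]
      exact List.flatten_concat
    have hxy : x = y := by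
      have h1 : y ≤ x := last_min N hNne hN hcN x hxly.1 ⟨M.dropLast.flatten, by rw [← hMN, hMfl]⟩
      have h2 : x ≤ y := last_min M hMne hM hcM y hyly.1 ⟨N.dropLast.flatten, by rw [hMN, hNfl]⟩
      exact le_antisymm h2 h1
    have hflfl : M.dropLast.flatten = N.dropLast.flatten := by
      apply List.append_cancel_right (bs := x)
      rw [← hMfl, hMN, hNfl, hxy]
    have hdl : M.dropLast = N.dropLast := by
      apply ih
      · exact fun m hm => hM m ((List.dropLast_sublist _).mem hm)
      · exact hcM.sublist (List.dropLast_sublist _)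
      · exact fun m hm => hN m ((List.dropLast_sublist _).mem hm)
      · exact hcN.sublist (List.dropLast_sublist _)
      · exact hflfl
      · have hxlen : 1 ≤ x.length := List.length_pos_iff.2 hxly.1
        have : M.flatten.length = M.dropLast.flatten.length + x.length := by
          rw [hMfl]; simp
        omega
    rw [← hMsplit, ← hNsplit, hdl, hxy]
end CFL2

namespace CFL3
open CFL CFL2

variable {A : Type} [LinearOrder A] (deg : A → ℕ)

theorem degW_cons (a : A) (t : List A) : degW deg (a :: t) = deg a + degW deg t := by
  simp [degW]

theorem degW_nil : degW deg ([] : List A) = 0 := rfl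

theorem degW_append (u v : List A) : degW deg (u ++ v) = degW deg u + degW deg v := by
  simp [degW]

theorem length_le_degW (hpos : ∀ a, 0 < deg a) : ∀ w : List A, w.length ≤ degW deg w := by
  intro w
  induction w with
  | nil => simp [degW]
  | cons a t ih =>
    rw [degW_cons]
    have := hpos a
    simp only [List.length_cons]
    omega

theorem deg_le_degW {w : List A} {a : A} (h : a ∈ w) : deg a ≤ degW deg w :=
  List.single_le_sum (fun x _ => Nat.zero_le x) _ (List.mem_map_of_mem (f := deg) h)

theorem degW_pos (hpos : ∀ a, 0 < deg a) {w : List A} (hw : w ≠ []) : 0 < degW deg w := by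
  have := length_le_degW deg hpos w
  have : w.length ≠ 0 := by simpa using hw
  omega

variable (hpos : ∀ a, 0 < deg a) (hfin : ∀ n : ℕ, Finite {a : A // deg a = n})

include hfin in
theorem finite_deg_le (n : ℕ) : Finite {a : A // deg a ≤ n} := by
  haveI : ∀ j : Fin (n+1), Finite {a : A // deg a = (j : ℕ)} := fun j => hfin j
  apply Finite.of_injective (β := Σ j : Fin (n+1), {a : A // deg a = (j : ℕ)})
    (fun a => ⟨⟨deg a.1, by omega⟩, ⟨a.1, rfl⟩⟩)
  intro a b hab
  have := congr_arg (fun x : Σ j : Fin (n+1), {a : A // deg a = (j : ℕ)} => (x.2.1 : A)) hab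
  exact Subtype.ext this

include hpos hfin in
theorem finite_words (n : ℕ) : Finite {w : List A // degW deg w = n} := by
  haveI : Finite {a : A // deg a ≤ n} := finite_deg_le deg hfin n
  haveI : Finite ↥{l : List {a : A // deg a ≤ n} | l.length ≤ n} :=
    (List.finite_length_le _ n).to_subtype
  apply Finite.of_injective
    (β := ↥{l : List {a : A // deg a ≤ n} | l.length ≤ n})
    (fun w => ⟨w.1.attach.map (fun x => ⟨x.1, by
        have := deg_le_degW deg x.2; omega⟩),
      by
        simp only [Set.mem_setOf_eq, List.length_map, List.length_attach]
        have := length_le_degW deg hpos w.1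
        omega⟩)
  intro v w hvw
  apply Subtype.ext
  have h1 := congr_arg (fun l => l.1.map Subtype.val) hvw
  simpa [List.map_map, Function.comp] using h1

include hpos hfin in
theorem finite_words_le (n : ℕ) : Finite {w : List A // degW deg w ≤ n} := by
  haveI : ∀ j : Fin (n+1), Finite {w : List A // degW deg w = (j : ℕ)} :=
    fun j => finite_words deg hpos hfin j
  apply Finite.of_injective (β := Σ j : Fin (n+1), {w : List A // degW deg w = (j : ℕ)})
    (fun w => ⟨⟨degW deg w.1, by omega⟩, ⟨w.1, rfl⟩⟩)
  intro a b hab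
  have := congr_arg (fun x : Σ j : Fin (n+1), {w : List A // degW deg w = (j : ℕ)} => x.2.1) hab
  exact Subtype.ext this

include hpos hfin in
theorem finite_lyndon_eq (n : ℕ) : Finite {w : List A // LyndonW w ∧ degW deg w = n} := by
  haveI := finite_words deg hpos hfin n
  exact Finite.of_injective (β := {w : List A // degW deg w = n}) (fun w => ⟨w.1, w.2.2⟩)
    (by
      intro a b hab
      apply Subtype.ext
      have h2 := congrArg Subtype.val hab
      exact h2)

def mdeg (M : Multiset (Lyn A)) : ℕ := (M.map fun l => degW deg l.1).sum

def sortL (M : Multiset (Lyn A)) : List (List A) := ((M.sort (· ≤ ·)).reverse).map Subtype.val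

theorem sortL_lyndon (M : Multiset (Lyn A)) : ∀ m ∈ sortL M, LyndonW m := by
  intro m hm
  simp only [sortL, List.mem_map, List.mem_reverse] at hm
  obtain ⟨l, _, rfl⟩ := hm
  exact l.2

theorem sortL_chain (M : Multiset (Lyn A)) : (sortL M).Chain' (· ≥ ·) := by
  apply List.isChain_iff_pairwise.2
  unfold sortL
  rw [List.pairwise_map]
  have h1 : ((M.sort (· ≤ ·)).reverse).Pairwise (fun a b : Lyn A => b ≤ a) :=
    List.pairwise_reverse.2 (Multiset.pairwise_sort M (· ≤ ·))
  exact h1.imp (fun h => h)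

theorem degW_flatten : ∀ L : List (List A), degW deg L.flatten = (L.map (degW deg)).sum := by
  intro L
  induction L with
  | nil => rfl
  | cons l L ih => simp [degW_append, ih]

theorem degW_sortL (M : Multiset (Lyn A)) : degW deg (sortL M).flatten = mdeg deg M := by
  rw [degW_flatten]
  unfold sortL
  unfold mdeg
  rw [List.map_map, List.map_reverse, List.sum_reverse]
  conv_rhs => rw [← Multiset.sort_eq M (· ≤ ·), Multiset.map_coe, Multiset.sum_coe]
  rfl

noncomputable def equivMW (n : ℕ) :
    {M : Multiset (Lyn A) // mdeg deg M = n} ≃ {w : List A // degW deg w = n} := by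
  apply Equiv.ofBijective
    (f := fun M : {M : Multiset (Lyn A) // mdeg deg M = n} =>
      (⟨(sortL M.1).flatten, by rw [degW_sortL]; exact M.2⟩ : {w : List A // degW deg w = n}))
  constructor
  · intro M N h
    have h2 : (sortL M.1).flatten = (sortL N.1).flatten := Subtype.ext_iff.1 h
    have h3 : sortL M.1 = sortL N.1 :=
      CFL2.cfl_unique ((sortL M.1).flatten).length _ _ (sortL_lyndon M.1) (sortL_chain M.1)
        (sortL_lyndon N.1) (sortL_chain N.1) h2 le_rfl
    have h4 : (M.1.sort (· ≤ ·)).reverse = (N.1.sort (· ≤ ·)).reverse :=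
      List.map_injective_iff.2 Subtype.val_injective h3
    have h5 : M.1.sort (· ≤ ·) = N.1.sort (· ≤ ·) := by
      have := congr_arg List.reverse h4
      simpa using this
    apply Subtype.ext
    rw [← Multiset.sort_eq M.1 (· ≤ ·), ← Multiset.sort_eq N.1 (· ≤ ·), h5]
  · rintro ⟨w, hw⟩
    obtain ⟨K, hK1, hK2, hK3⟩ := CFL2.cfl_exists w
    set Ml : List (Lyn A) := K.attach.map (fun m => ⟨m.1, hK1 m.1 m.2⟩) with hMl
    have hmapval : Ml.map Subtype.val = K := by
      rw [hMl, List.map_map]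
      exact List.attach_map_subtype_val K
    have hpwK : K.Pairwise (· ≥ ·) := List.isChain_iff_pairwise.1 hK2
    have hpwMl : Ml.Pairwise (fun a b : Lyn A => b ≤ a) := by
      have h1 : (Ml.map Subtype.val).Pairwise (· ≥ ·) := hmapval ▸ hpwK
      have h2 := List.pairwise_map.1 h1
      exact h2.imp (fun h => h)
    have hsort : (Multiset.sort (↑Ml : Multiset (Lyn A)) (· ≤ ·)) = Ml.reverse := by
      have hp1 : List.Perm (Multiset.sort (↑Ml : Multiset (Lyn A)) (· ≤ ·)) Ml :=
        Multiset.coe_eq_coe.1 (Multiset.sort_eq (↑Ml : Multiset (Lyn A)) (· ≤ ·))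
      exact List.Perm.eq_of_pairwise' (r := (· ≤ ·))
        (Multiset.pairwise_sort _ _) (List.pairwise_reverse.2 hpwMl) (hp1.trans (List.reverse_perm Ml).symm)
    have hsortL : sortL (↑Ml : Multiset (Lyn A)) = K := by
      unfold sortL
      rw [hsort, List.reverse_reverse, hmapval]
    have hmdeg : mdeg deg (↑Ml : Multiset (Lyn A)) = n := by
      have : mdeg deg (↑Ml : Multiset (Lyn A)) = degW deg (sortL (↑Ml : Multiset (Lyn A))).flatten :=
        (degW_sortL deg _).symm
      rw [this, hsortL, hK3, hw]
    exact ⟨⟨(↑Ml : Multiset (Lyn A)), hmdeg⟩, by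
      apply Subtype.ext
      simp only
      rw [hsortL, hK3]⟩

theorem card_words_eq (n : ℕ) :
    Nat.card {w : List A // degW deg w = n}
      = Nat.card {M : Multiset (Lyn A) // mdeg deg M = n} :=
  (Nat.card_congr (equivMW deg n)).symm

theorem mdeg_add (M N : Multiset (Lyn A)) : mdeg deg (M + N) = mdeg deg M + mdeg deg N := by
  unfold mdeg
  rw [Multiset.map_add, Multiset.sum_add]

theorem mdeg_replicate (m : ℕ) (l : Lyn A) :
    mdeg deg (Multiset.replicate m l) = m * degW deg l.1 := by
  unfold mdeg
  rw [Multiset.map_replicate, Multiset.sum_replicate, smul_eq_mul]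

theorem count_mul_le (M : Multiset (Lyn A)) (l : Lyn A) :
    M.count l * degW deg l.1 ≤ mdeg deg M := by
  have h1 : Multiset.replicate (M.count l) l ≤ M :=
    Multiset.le_count_iff_replicate_le.1 le_rfl
  obtain ⟨u, hu⟩ := Multiset.le_iff_exists_add.1 h1
  conv_rhs => rw [hu]
  rw [mdeg_add, mdeg_replicate]
  omega

theorem deg_mem_le (M : Multiset (Lyn A)) (l : Lyn A) (h : l ∈ M) :
    degW deg l.1 ≤ mdeg deg M := by
  have h1 : 1 ≤ M.count l := Multiset.one_le_count_iff_mem.2 h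
  have := count_mul_le deg M l
  nlinarith

variable (hpos : ∀ a, 0 < deg a) (hfin : ∀ n : ℕ, Finite {a : A // deg a = n})

include hpos hfin in
theorem finite_multisets (n : ℕ) : Finite {M : Multiset (Lyn A) // mdeg deg M = n} := by
  haveI := finite_words deg hpos hfin n
  exact Finite.of_equiv _ (equivMW deg n).symm

include hpos hfin in
theorem card_count_ge (n m : ℕ) (l : Lyn A) (hle : m * degW deg l.1 ≤ n) :
    Nat.card {M : {M : Multiset (Lyn A) // mdeg deg M = n} // m ≤ M.1.count l}
      = Nat.card {M : Multiset (Lyn A) // mdeg deg M = n - m * degW deg l.1} := by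
  apply Nat.card_congr
  refine ⟨fun M => ⟨M.1.1 - Multiset.replicate m l, ?_⟩,
         fun M => ⟨⟨M.1 + Multiset.replicate m l, ?_⟩, ?_⟩, ?_, ?_⟩
  · have hrep : Multiset.replicate m l ≤ M.1.1 := Multiset.le_count_iff_replicate_le.1 M.2
    have hsum : (M.1.1 - Multiset.replicate m l) + Multiset.replicate m l = M.1.1 :=
      tsub_add_cancel_of_le hrep
    have h2 := congrArg (mdeg deg) hsum
    rw [mdeg_add, mdeg_replicate, M.1.2] at h2
    omega
  · rw [mdeg_add, mdeg_replicate, M.2]; omega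
  · rw [Multiset.count_add, Multiset.count_replicate_self]; omega
  · intro M
    apply Subtype.ext; apply Subtype.ext
    exact tsub_add_cancel_of_le (Multiset.le_count_iff_replicate_le.1 M.2)
  · intro M
    apply Subtype.ext
    simp

include hpos hfin in
theorem key_count (n : ℕ) :
    n * Nat.card {M : Multiset (Lyn A) // mdeg deg M = n}
      = ∑ k ∈ Finset.range (n+1),
          (∑ d ∈ k.divisors, d * Nat.card {w : List A // LyndonW w ∧ degW deg w = d})
            * Nat.card {M : Multiset (Lyn A) // mdeg deg M = n - k} := by
  classical
  haveI hMfin : ∀ m : ℕ, Finite {M : Multiset (Lyn A) // mdeg deg M = m} :=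
    fun m => finite_multisets deg hpos hfin m
  haveI hMfty : Fintype {M : Multiset (Lyn A) // mdeg deg M = n} := Fintype.ofFinite _
  set Wm : ℕ → ℕ := fun m => Nat.card {M : Multiset (Lyn A) // mdeg deg M = m} with hWm
  set Ld : ℕ → ℕ := fun d => Nat.card {w : List A // LyndonW w ∧ degW deg w = d} with hLd
  haveI hfinT : Finite ↥{l : Lyn A | degW deg l.1 ≤ n} := by
    haveI := finite_words_le deg hpos hfin n
    exact Finite.of_injective
      (fun l : ↥{l : Lyn A | degW deg l.1 ≤ n} => (⟨l.1.1, l.2⟩ : {w : List A // degW deg w ≤ n}))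
      (by
        intro x y h
        have h2 := congrArg (fun z : {w : List A // degW deg w ≤ n} => z.1) h
        exact Subtype.ext (Subtype.ext h2))
  have hTfin : {l : Lyn A | degW deg l.1 ≤ n}.Finite := Set.toFinite _
  set T : Finset (Lyn A) := hTfin.toFinset with hT
  have hmemT : ∀ l : Lyn A, l ∈ T ↔ degW deg l.1 ≤ n := fun l => hTfin.mem_toFinset
  have hdpos : ∀ l : Lyn A, 1 ≤ degW deg l.1 := fun l => degW_pos deg hpos l.2.1
  -- Step A
  have hA : (∑ M : {M : Multiset (Lyn A) // mdeg deg M = n}, mdeg deg M.1) = n * Wm n := by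
    rw [Finset.sum_congr rfl (fun M _ => M.2), Finset.sum_const, smul_eq_mul,
      Finset.card_univ]
    have h2 : Wm n = Fintype.card {M : Multiset (Lyn A) // mdeg deg M = n} :=
      Nat.card_eq_fintype_card
    rw [h2, mul_comm]
  -- Step B
  have hB : ∀ M : {M : Multiset (Lyn A) // mdeg deg M = n},
      mdeg deg M.1 = ∑ l ∈ T, M.1.count l * degW deg l.1 := by
    intro M
    have h1 : mdeg deg M.1 = ∑ l ∈ M.1.toFinset, M.1.count l • degW deg l.1 :=
      Finset.sum_multiset_map_count M.1 _
    rw [h1]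
    apply Finset.sum_subset
    · intro l hl
      rw [hmemT]
      have h2 := deg_mem_le deg M.1 l (Multiset.mem_toFinset.1 hl)
      have h3 := M.2
      omega
    · intro l _ hl
      rw [Multiset.count_eq_zero.2 (fun h => hl (Multiset.mem_toFinset.2 h))]
      simp
  -- Step D
  have hcle : ∀ (l : Lyn A) (M : {M : Multiset (Lyn A) // mdeg deg M = n}), M.1.count l ≤ n := by
    intro l M
    have h1 := count_mul_le deg M.1 l
    have h2 := hdpos l
    have h3 := M.2
    nlinarith
  have hD : ∀ l : Lyn A,
      (∑ M : {M : Multiset (Lyn A) // mdeg deg M = n}, M.1.count l)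
        = ∑ m ∈ Finset.Icc 1 n,
            (if m * degW deg l.1 ≤ n then Wm (n - m * degW deg l.1) else 0) := by
    intro l
    have h1 : ∀ M : {M : Multiset (Lyn A) // mdeg deg M = n},
        M.1.count l = ((Finset.Icc 1 n).filter (fun m => m ≤ M.1.count l)).card := by
      intro M
      have hc := hcle l M
      have h2 : (Finset.Icc 1 n).filter (fun m => m ≤ M.1.count l)
          = Finset.Icc 1 (M.1.count l) := by
        ext m
        simp only [Finset.mem_filter, Finset.mem_Icc]
        omega
      rw [h2, Nat.card_Icc]
      omega
    rw [Finset.sum_congr rfl (fun M _ => h1 M)]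
    have h2 : ∀ M : {M : Multiset (Lyn A) // mdeg deg M = n},
        ((Finset.Icc 1 n).filter (fun m => m ≤ M.1.count l)).card
          = ∑ m ∈ Finset.Icc 1 n, (if m ≤ M.1.count l then 1 else 0) :=
      fun M => Finset.card_filter _ _
    rw [Finset.sum_congr rfl (fun M _ => h2 M), Finset.sum_comm]
    apply Finset.sum_congr rfl
    intro m hm
    rw [← Finset.card_filter]
    by_cases hcase : m * degW deg l.1 ≤ n
    · rw [if_pos hcase]
      have h3 : (Finset.univ.filter
            (fun M : {M : Multiset (Lyn A) // mdeg deg M = n} => m ≤ M.1.count l)).card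
          = Fintype.card {M : {M : Multiset (Lyn A) // mdeg deg M = n} // m ≤ M.1.count l} :=
        (Fintype.card_subtype _).symm
      rw [h3]
      have h4 := card_count_ge deg hpos hfin n m l hcase
      rw [Nat.card_eq_fintype_card] at h4
      rw [h4]
    · rw [if_neg hcase]
      rw [Finset.card_eq_zero, Finset.filter_eq_empty_iff]
      intro M _
      intro hle
      apply hcase
      calc m * degW deg l.1 ≤ M.1.count l * degW deg l.1 := Nat.mul_le_mul_right _ hle
      _ ≤ mdeg deg M.1 := count_mul_le deg M.1 l
      _ = n := M.2
  -- Main rearrangement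
  have hMain : n * Wm n = ∑ l ∈ T, degW deg l.1 *
      (∑ m ∈ Finset.Icc 1 n,
        (if m * degW deg l.1 ≤ n then Wm (n - m * degW deg l.1) else 0)) := by
    rw [← hA, Finset.sum_congr rfl (fun M _ => hB M), Finset.sum_comm]
    apply Finset.sum_congr rfl
    intro l _
    rw [← Finset.sum_mul, hD l, mul_comm]
  -- Fiberwise over degrees
  have hFib : ∀ f : ℕ → ℕ, (∑ l ∈ T, f (degW deg l.1))
      = ∑ d ∈ Finset.Icc 1 n, (T.filter (fun l => degW deg l.1 = d)).card * f d := by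
    intro f
    rw [← Finset.sum_fiberwise_of_maps_to (g := fun l : Lyn A => degW deg l.1)
      (t := Finset.Icc 1 n) (fun l hl => Finset.mem_Icc.2 ⟨hdpos l, (hmemT l).1 hl⟩) 
      (fun l => f (degW deg l.1))]
    apply Finset.sum_congr rfl
    intro d _
    rw [Finset.sum_congr rfl (fun l hl => by rw [(Finset.mem_filter.1 hl).2]),
      Finset.sum_const, smul_eq_mul]
  have hLcard : ∀ d ∈ Finset.Icc 1 n,
      (T.filter (fun l => degW deg l.1 = d)).card = Ld d := by
    intro d hd
    obtain ⟨hd1, hd2⟩ := Finset.mem_Icc.1 hd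
    have e : ↥(T.filter (fun l => degW deg l.1 = d))
        ≃ {w : List A // LyndonW w ∧ degW deg w = d} :=
      { toFun := fun x => ⟨x.1.1, x.1.2, (Finset.mem_filter.1 x.2).2⟩
        invFun := fun w => ⟨⟨w.1, w.2.1⟩, Finset.mem_filter.2
          ⟨(hmemT _).2 (by rw [show degW deg ((⟨w.1, w.2.1⟩ : Lyn A)).1 = d from w.2.2]; exact hd2),
            w.2.2⟩⟩
        left_inv := fun x => by apply Subtype.ext; apply Subtype.ext; rfl
        right_inv := fun w => rfl }
    calc (T.filter (fun l => degW deg l.1 = d)).card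
        = Fintype.card ↥(T.filter (fun l => degW deg l.1 = d)) := (Fintype.card_coe _).symm
      _ = Nat.card ↥(T.filter (fun l => degW deg l.1 = d)) := Nat.card_eq_fintype_card.symm
      _ = Nat.card {w : List A // LyndonW w ∧ degW deg w = d} := Nat.card_congr e
      _ = Ld d := rfl
  rw [hMain, hFib (fun d => d * (∑ m ∈ Finset.Icc 1 n, (if m * d ≤ n then Wm (n - m * d) else 0)))]
  rw [Finset.sum_congr rfl (fun d hd => by rw [hLcard d hd])]
  -- now: ∑ d ∈ Icc 1 n, Ld d * (d * ∑ m, ite) = RHS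
  have hstep : ∀ d ∈ Finset.Icc 1 n,
      Ld d * (d * (∑ m ∈ Finset.Icc 1 n, (if m * d ≤ n then Wm (n - m * d) else 0)))
        = ∑ k ∈ Finset.Icc 1 n, ∑ m ∈ Finset.Icc 1 n,
            (if m * d = k then d * Ld d * Wm (n - k) else 0) := by
    intro d hd
    obtain ⟨hd1, _⟩ := Finset.mem_Icc.1 hd
    rw [Finset.mul_sum, Finset.mul_sum, Finset.sum_comm]
    apply Finset.sum_congr rfl
    intro m hm
    obtain ⟨hm1, _⟩ := Finset.mem_Icc.1 hm
    rw [mul_ite, mul_ite, mul_zero, mul_zero]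
    have h5 : (∑ k ∈ Finset.Icc 1 n, (if m * d = k then d * Ld d * Wm (n - k) else 0))
        = if m * d ∈ Finset.Icc 1 n then d * Ld d * Wm (n - m * d) else 0 :=
      Finset.sum_ite_eq _ _ _
    rw [h5]
    have h6 : m * d ∈ Finset.Icc 1 n ↔ m * d ≤ n := by
      rw [Finset.mem_Icc]
      constructor
      · exact fun h => h.2
      · intro h
        exact ⟨Nat.one_le_iff_ne_zero.2 (by positivity), h⟩
    rw [if_congr h6 rfl rfl]
    rcases le_or_gt (m * d) n with h | h
    · rw [if_pos h, if_pos h]; ring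
    · rw [if_neg (by omega), if_neg (by omega)]
  rw [Finset.sum_congr rfl hstep, Finset.sum_comm]
  -- now: ∑ k ∈ Icc 1 n, ∑ d ∈ Icc 1 n, ∑ m ∈ Icc 1 n, ite = RHS over range (n+1)
  have hinner : ∀ k ∈ Finset.Icc 1 n,
      (∑ d ∈ Finset.Icc 1 n, ∑ m ∈ Finset.Icc 1 n,
          (if m * d = k then d * Ld d * Wm (n - k) else 0))
        = (∑ d ∈ k.divisors, d * Ld d) * Wm (n - k) := by
    intro k hk
    obtain ⟨hk1, hk2⟩ := Finset.mem_Icc.1 hk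
    have h7 : ∀ d ∈ Finset.Icc 1 n,
        (∑ m ∈ Finset.Icc 1 n, (if m * d = k then d * Ld d * Wm (n - k) else 0))
          = if d ∣ k then d * Ld d * Wm (n - k) else 0 := by
      intro d hd
      obtain ⟨hd1, _⟩ := Finset.mem_Icc.1 hd
      by_cases hdvd : d ∣ k
      · rw [if_pos hdvd]
        have h8 : ∀ m ∈ Finset.Icc 1 n,
            (if m * d = k then d * Ld d * Wm (n - k) else 0)
              = if m = k / d then d * Ld d * Wm (n - k) else 0 := by
          intro m _
          have : (m * d = k) ↔ (m = k / d) := by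
            constructor
            · rintro rfl
              rw [Nat.mul_div_cancel _ (by omega)]
            · rintro rfl
              exact Nat.div_mul_cancel hdvd
          rw [if_congr this rfl rfl]
        rw [Finset.sum_congr rfl h8, Finset.sum_ite_eq' _ _ _]
        have h9 : k / d ∈ Finset.Icc 1 n := by
          rw [Finset.mem_Icc]
          constructor
          · have hdk : d ≤ k := Nat.le_of_dvd (by omega) hdvd
            rw [Nat.le_div_iff_mul_le (by omega)]
            omega
          · exact le_trans (Nat.div_le_self _ _) hk2
        rw [if_pos h9]
      · rw [if_neg hdvd]
        apply Finset.sum_eq_zero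
        intro m _
        rw [if_neg]
        intro heq
        exact hdvd (heq ▸ ⟨m, mul_comm m d⟩)
    rw [Finset.sum_congr rfl h7]
    have h10 : (Finset.Icc 1 n).filter (fun d => d ∣ k) = k.divisors := by
      ext d
      rw [Finset.mem_filter, Finset.mem_Icc, Nat.mem_divisors]
      constructor
      · rintro ⟨⟨_, _⟩, hdvd⟩
        exact ⟨hdvd, by omega⟩
      · rintro ⟨hdvd, _⟩
        refine ⟨⟨Nat.pos_of_dvd_of_pos hdvd (by omega), ?_⟩, hdvd⟩
        exact le_trans (Nat.le_of_dvd (by omega) hdvd) hk2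
    rw [← Finset.sum_filter, h10, Finset.sum_mul]
  rw [Finset.sum_congr rfl hinner]
  have h11 : Finset.range (n+1) = insert 0 (Finset.Icc 1 n) := by
    ext x
    simp only [Finset.mem_range, Finset.mem_insert, Finset.mem_Icc]
    omega
  rw [h11, Finset.sum_insert (by simp)]
  rw [Nat.divisors_zero]
  simp
  rfl
include hpos in
theorem card_words_zero : Nat.card {w : List A // degW deg w = 0} = 1 := by
  have huniq : ∀ w : {w : List A // degW deg w = 0}, w = ⟨[], rfl⟩ := by
    rintro ⟨w, hw⟩
    cases w with
    | nil => rfl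
    | cons a t =>
      exfalso
      rw [degW_cons] at hw
      have := hpos a
      omega
  haveI : Unique {w : List A // degW deg w = 0} := ⟨⟨⟨[], rfl⟩⟩, huniq⟩
  exact Nat.card_unique

include hpos hfin in
theorem card_words_rec (n : ℕ) (hn : 0 < n) :
    Nat.card {w : List A // degW deg w = n}
      = ∑ j ∈ Finset.range (n+1),
          Nat.card {a : A // deg a = j} * Nat.card {w : List A // degW deg w = n - j} := by
  classical
  haveI hf1 : ∀ m : ℕ, Fintype {a : A // deg a = m} := fun m => @Fintype.ofFinite _ (hfin m)
  haveI hf2 : ∀ m : ℕ, Fintype {w : List A // degW deg w = m} :=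
    fun m => @Fintype.ofFinite _ (finite_words deg hpos hfin m)
  have e1 : {p : A × List A // deg p.1 + degW deg p.2 = n} ≃ {w : List A // degW deg w = n} := by
    apply Equiv.ofBijective
      (fun p => ⟨p.1.1 :: p.1.2, by rw [degW_cons]; exact p.2⟩)
    constructor
    · rintro ⟨⟨a, t⟩, hp⟩ ⟨⟨b, s⟩, hq⟩ h
      have h2 := congrArg Subtype.val h
      simp only [List.cons.injEq] at h2
      apply Subtype.ext
      simp only [h2.1, h2.2]
    · rintro ⟨w, hw⟩
      cases w with
      | nil =>
        exfalso
        have h0 : (0 : ℕ) = n := hw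
        omega
      | cons a t => exact ⟨⟨(a, t), by rw [← degW_cons]; exact hw⟩, rfl⟩
  have e2 : (Σ j : Fin (n+1),
        ({a : A // deg a = (j : ℕ)} × {w : List A // degW deg w = n - (j : ℕ)}))
      ≃ {p : A × List A // deg p.1 + degW deg p.2 = n} :=
    { toFun := fun x => ⟨(x.2.1.1, x.2.2.1), by
        have h1 := x.2.1.2
        have h2 := x.2.2.2
        have h3 : (x.1 : ℕ) < n + 1 := x.1.isLt
        rw [h1, h2]
        omega⟩
      invFun := fun p => ⟨⟨deg p.1.1, by have := p.2; omega⟩, ⟨p.1.1, rfl⟩,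
        ⟨p.1.2, by have := p.2; show degW deg p.1.2 = n - deg p.1.1; omega⟩⟩
      left_inv := by
        rintro ⟨⟨jv, hjlt⟩, ⟨a, ha⟩, ⟨w, hw⟩⟩
        have ha' : deg a = jv := ha
        subst ha'
        rfl
      right_inv := fun p => by apply Subtype.ext; rfl }
  rw [← Nat.card_congr (e2.trans e1), Nat.card_eq_fintype_card, Fintype.card_sigma]
  rw [Fin.sum_univ_eq_sum_range (fun j =>
    Fintype.card ({a : A // deg a = j} × {w : List A // degW deg w = n - j}))]
  apply Finset.sum_congr rfl
  intro j _
  rw [Fintype.card_prod, Nat.card_eq_fintype_card, Nat.card_eq_fintype_card]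

end CFL3

open PowerSeries in
/-- The number `Lₙ` of Lyndon words of degree `n` is
`(1/n) Σ_{d∣n} μ(n/d) c_d`, where `Σ_{n≥1} c_n xⁿ = x (d/dx) log A(x)`, i.e.
`x·A'(x) = A(x)·Σ c_n xⁿ`, for the Poincaré series `A(x) = (1 - Σ_{n≥1} |Aₙ| xⁿ)⁻¹`. -/
theorem lyndon_count_formula {A : Type} [LinearOrder A]
    (deg : A → ℕ) (hpos : ∀ a, 0 < deg a)
    (hfin : ∀ n : ℕ, Finite {a : A // deg a = n})
    (c : ℕ → ℚ)
    (hc : PowerSeries.X *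
        PowerSeries.derivative ℚ ((1 - PowerSeries.mk
          (fun n => if n = 0 then 0 else (Nat.card {a : A // deg a = n} : ℚ)))⁻¹)
      = (1 - PowerSeries.mk
          (fun n => if n = 0 then 0 else (Nat.card {a : A // deg a = n} : ℚ)))⁻¹ *
        PowerSeries.mk c) :
    ∀ n : ℕ, 0 < n →
      (Nat.card {w : List A // LyndonW w ∧ degW deg w = n} : ℚ)
        = (1 / n) * ∑ d ∈ n.divisors, (ArithmeticFunction.moebius (n / d) : ℚ) * c d := by
  classical
  set F : PowerSeries ℚ := PowerSeries.mk
      (fun n => if n = 0 then 0 else (Nat.card {a : A // deg a = n} : ℚ)) with hF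
  set Wq : ℕ → ℚ := fun m => (Nat.card {w : List A // degW deg w = m} : ℚ) with hWq
  set c' : ℕ → ℚ := fun j => ∑ d ∈ j.divisors,
      (d : ℚ) * (Nat.card {w : List A // LyndonW w ∧ degW deg w = d} : ℚ) with hc'
  have ha0 : (Nat.card {a : A // deg a = 0} : ℚ) = 0 := by
    haveI : IsEmpty {a : A // deg a = 0} := ⟨fun a => (hpos a.1).ne' a.2⟩
    simp
  have hW0 : Wq 0 = 1 := by
    rw [hWq]
    simp only []
    rw [CFL3.card_words_zero deg hpos]
    norm_num
  have hWrecQ : ∀ k, 0 < k → Wq k = ∑ i ∈ Finset.range (k+1),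
      (if i = 0 then 0 else (Nat.card {a : A // deg a = i} : ℚ)) * Wq (k - i) := by
    intro k hk
    have h := CFL3.card_words_rec deg hpos hfin k hk
    have h2 : Wq k = ∑ i ∈ Finset.range (k+1),
        (Nat.card {a : A // deg a = i} : ℚ) * Wq (k - i) := by
      rw [hWq]
      push_cast [h]
      norm_num
    rw [h2]
    apply Finset.sum_congr rfl
    intro i _
    rcases eq_or_ne i 0 with rfl | hi
    · rw [if_pos rfl, ha0]
    · rw [if_neg hi]
  have h1 : (1 - F) * PowerSeries.mk Wq = 1 := by
    ext k
    rw [PowerSeries.coeff_mul, Finset.Nat.sum_antidiagonal_eq_sum_range_succ_mk]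
    have hcoeff : ∀ j, PowerSeries.coeff j (1 - F)
        = (if j = 0 then 1 else 0) - (if j = 0 then 0 else (Nat.card {a : A // deg a = j} : ℚ)) := by
      intro j
      rw [map_sub, PowerSeries.coeff_one, hF, PowerSeries.coeff_mk]
    rcases Nat.eq_zero_or_pos k with rfl | hk
    · rw [Finset.sum_range_one, hcoeff 0, PowerSeries.coeff_one]
      simp only [PowerSeries.coeff_mk]
      rw [show (0:ℕ) - 0 = 0 from rfl]
      rw [hW0]
      norm_num
    · rw [PowerSeries.coeff_one, if_neg (by omega)]
      have hterms : ∀ i ∈ Finset.range (k+1),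
          PowerSeries.coeff i (1 - F) * PowerSeries.coeff (k - i) (PowerSeries.mk Wq)
            = (if i = 0 then Wq k else 0)
              - (if i = 0 then 0 else (Nat.card {a : A // deg a = i} : ℚ)) * Wq (k - i) := by
        intro i _
        rw [hcoeff i, PowerSeries.coeff_mk]
        rcases eq_or_ne i 0 with rfl | hi
        · simp
        · simp [hi]
      rw [Finset.sum_congr rfl hterms, Finset.sum_sub_distrib,
        Finset.sum_ite_eq' (Finset.range (k+1)) 0 (fun _ => Wq k),
        if_pos (Finset.mem_range.2 (by omega)), ← hWrecQ k hk]
      exact sub_self _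
  have hFconst : PowerSeries.constantCoeff (1 - F) ≠ 0 := by
    rw [map_sub, map_one, hF]
    simp
  have hWinv : (1 - F)⁻¹ = PowerSeries.mk Wq :=
    (PowerSeries.inv_eq_iff_mul_eq_one hFconst).2 (by rw [mul_comm]; exact h1)
  rw [hWinv] at hc
  have hc0 : c 0 = 0 := by
    have h2 := congrArg (PowerSeries.constantCoeff) hc
    rw [map_mul, map_mul] at h2
    rw [PowerSeries.constantCoeff_X, zero_mul] at h2
    have h3 : PowerSeries.constantCoeff (PowerSeries.mk Wq) = Wq 0 :=
      PowerSeries.constantCoeff_mk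
    have h4 : PowerSeries.constantCoeff (PowerSeries.mk c) = c 0 :=
      PowerSeries.constantCoeff_mk
    rw [h3, h4, hW0, one_mul] at h2
    exact h2.symm
  have hI1 : ∀ k : ℕ, ((k+1 : ℕ) : ℚ) * Wq (k+1)
      = ∑ i ∈ Finset.range (k+2), Wq i * c ((k+1) - i) := by
    intro k
    have h2 := congrArg (PowerSeries.coeff (k+1)) hc
    rw [PowerSeries.coeff_succ_X_mul, PowerSeries.coeff_derivative, PowerSeries.coeff_mk,
      PowerSeries.coeff_mul, Finset.Nat.sum_antidiagonal_eq_sum_range_succ_mk] at h2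
    simp only [PowerSeries.coeff_mk] at h2
    rw [← h2]
    push_cast
    ring
  have hI2 : ∀ k : ℕ, 0 < k → (k : ℚ) * Wq k
      = ∑ i ∈ Finset.range (k+1), Wq i * c' (k - i) := by
    intro k hk
    have h3 := CFL3.key_count deg hpos hfin k
    have hWM : ∀ m, Nat.card {M : Multiset (Lyn A) // CFL3.mdeg deg M = m}
        = Nat.card {w : List A // degW deg w = m} :=
      fun m => (CFL3.card_words_eq deg m).symm
    simp only [hWM] at h3
    have h4 : (k:ℚ) * Wq k = ∑ j ∈ Finset.range (k+1), c' j * Wq (k - j) := by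
      have h4' := congrArg (fun x : ℕ => (x : ℚ)) h3
      push_cast at h4'
      exact h4'
    rw [h4]
    have h5 := Finset.sum_range_reflect (fun i => Wq i * c' (k - i)) (k+1)
    rw [← h5]
    apply Finset.sum_congr rfl
    intro j hj
    have hjk : j ≤ k := by
      have := Finset.mem_range.1 hj
      omega
    rw [show k + 1 - 1 - j = k - j from by omega, show k - (k - j) = j from by omega, mul_comm]
  have hceq : ∀ k, c k = c' k := by
    intro k
    induction k using Nat.strong_induction_on with
    | _ k ih =>
      rcases Nat.eq_zero_or_pos k with rfl | hk
      · rw [hc0, hc']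
        simp
      · obtain ⟨k', rfl⟩ : ∃ k', k = k' + 1 := ⟨k - 1, by omega⟩
        have e1 := hI1 k'
        have e2 := hI2 (k'+1) (by omega)
        rw [e2] at e1
        rw [Finset.sum_range_succ' (fun i => Wq i * c ((k'+1) - i)) (k'+1),
            Finset.sum_range_succ' (fun i => Wq i * c' ((k'+1) - i)) (k'+1)] at e1
        have heq : ∀ i ∈ Finset.range (k'+1),
            Wq (i+1) * c ((k'+1) - (i+1)) = Wq (i+1) * c' ((k'+1) - (i+1)) := by
          intro i _
          rw [ih ((k'+1) - (i+1)) (by omega)]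
        rw [Finset.sum_congr rfl heq] at e1
        have e3 := add_left_cancel e1
        simp only [Nat.sub_zero, hW0, one_mul] at e3
        exact e3.symm
  intro n hn
  have hmob := (ArithmeticFunction.sum_eq_iff_sum_mul_moebius_eq (R := ℚ)
    (f := fun d => (d : ℚ) * (Nat.card {w : List A // LyndonW w ∧ degW deg w = d} : ℚ))
    (g := c)).1 (fun j _ => by rw [hceq j, hc']) n hn
  rw [Nat.sum_divisorsAntidiagonal'
    (f := fun i j => ((ArithmeticFunction.moebius i : ℤ) : ℚ) * c j)] at hmob
  have hn0 : (n : ℚ) ≠ 0 := Nat.cast_ne_zero.2 (by omega)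
  rw [show (∑ d ∈ n.divisors, (ArithmeticFunction.moebius (n / d) : ℚ) * c d)
      = (n : ℚ) * (Nat.card {w : List A // LyndonW w ∧ degW deg w = n} : ℚ) from hmob]
  field_simp
end
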